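/- Let n be a positive integer. If X generates a Boolean algebra A and X is n-independent, then every n-preserving function from X into any Boolean algebra extends to a unique homomorphism on A; that is, A is n-free over X. -/

import Mathlib

open scoped Classical

variable {A : Type*}

/-- ω-independence: `⊥ ∉ X`, (⊥1), (⊥3). -/
def OmegaIndep [BooleanAlgebra A] (X : Set A) : Prop :=
  (⊥ : A) ∉ X ∧
  (∀ F : Finset A, F.Nonempty → ↑F ⊆ X → F.sup id ≠ ⊤) ∧
  (∀ F G : Finset A, F.Nonempty → G.Nonempty → ↑F ⊆ X → ↑G ⊆ X →
      F.inf id ≠ ⊥ → F.inf id ≤ G.sup id → (F ∩ G).Nonempty)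

/-- n-independence: `⊥ ∉ X`, (⊥1), (⊥2)_n, (⊥3); `n = ⊤` codes ω. -/
def NIndep [BooleanAlgebra A] (n : ℕ∞) (X : Set A) : Prop :=
  (⊥ : A) ∉ X ∧
  (∀ F : Finset A, F.Nonempty → ↑F ⊆ X → F.sup id ≠ ⊤) ∧
  (∀ F : Finset A, F.Nonempty → ↑F ⊆ X → F.inf id = ⊥ →
      ∃ F' ⊆ F, (F'.card : ℕ∞) ≤ n ∧ F'.inf id = ⊥) ∧
  (∀ F G : Finset A, F.Nonempty → G.Nonempty → ↑F ⊆ X → ↑G ⊆ X →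
      F.inf id ≠ ⊥ → F.inf id ≤ G.sup id → (F ∩ G).Nonempty)

/-- Elementary product `∏_{x ∈ R} x^{ε x}`. -/
def elemProd [BooleanAlgebra A] (R : Finset A) (ε : A → Bool) : A :=
  R.inf (fun x => if ε x then x else xᶜ)

/-- `f` is n-preserving on `X` (`n = ⊤` codes ω-preserving). -/
def NPreserving [BooleanAlgebra A] {B : Type*} [BooleanAlgebra B]
    (n : ℕ∞) (X : Set A) (f : A → B) : Prop :=
  ∀ F : Finset A, ↑F ⊆ X → (F.card : ℕ∞) ≤ n → F.inf id = ⊥ → F.inf f = ⊥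

/-- Membership in the subalgebra generated by `X`. -/
inductive Gen [BooleanAlgebra A] (X : Set A) : A → Prop
  | of {x : A} : x ∈ X → Gen X x
  | bot : Gen X ⊥
  | top : Gen X ⊤
  | inf {x y : A} : Gen X x → Gen X y → Gen X (x ⊓ y)
  | sup {x y : A} : Gen X x → Gen X y → Gen X (x ⊔ y)
  | compl {x : A} : Gen X x → Gen X xᶜ

/-- `X` generates the Boolean algebra `A`. -/
def Generates [BooleanAlgebra A] (X : Set A) : Prop := ∀ a : A, Gen X a

/-!
Consider the map `x ↦ (x, f x)` from `X` into `A × B` and the subalgebra `S` it generates.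
Every element of `S` is a finite join of terms `⨅ F ⊓ (⨆ G)ᶜ` with `F, G ⊆ X`, taken coordinatewise.
If such a term vanishes in `A`, then either `⨅ F = ⊥`, and by (⊥2)ₙ already `n` of its factors
meet in `⊥`, which `f` preserves; or `⨅ F ≤ ⨆ G` with `⨅ F ≠ ⊥`, and by (⊥1), (⊥3) some `x` lies in
`F ∩ G`, so the term is below `f x ⊓ (f x)ᶜ` in `B` as well. Hence an element of `S` vanishing in the
first coordinate vanishes in the second, so (using symmetric differences) `S` is the graph of a
function `A → B`, defined everywhere since `X` generates `A`; this function is the homomorphism.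
-/

section NormalForm

variable {C D : Type*} [BooleanAlgebra C] (h : D → C)

def dnfTerm (t : Finset D × Finset D) : C :=
  t.1.inf h ⊓ (t.2.sup h)ᶜ

def HasDNF (X : Set D) (p : C) : Prop :=
  ∃ T : Finset (Finset D × Finset D), (∀ t ∈ T, ↑t.1 ⊆ X ∧ ↑t.2 ⊆ X) ∧ p = T.sup (dnfTerm h)

variable {h} {X : Set D}

lemma dnfTerm_inf_dnfTerm (t₁ t₂ : Finset D × Finset D) :
    dnfTerm h t₁ ⊓ dnfTerm h t₂ = dnfTerm h (t₁.1 ∪ t₂.1, t₁.2 ∪ t₂.2) := by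
  simp only [dnfTerm, Finset.inf_union, Finset.sup_union, compl_sup]
  exact inf_inf_inf_comm ..

lemma hasDNF_of_mem {x : D} (hx : x ∈ X) : HasDNF h X (h x) :=
  ⟨{({x}, ∅)}, by simp [hx], by simp [dnfTerm]⟩

lemma hasDNF_compl_of_mem {x : D} (hx : x ∈ X) : HasDNF h X (h x)ᶜ :=
  ⟨{(∅, {x})}, by simp [hx], by simp [dnfTerm]⟩

lemma hasDNF_bot : HasDNF h X ⊥ := ⟨∅, by simp, by simp⟩

lemma hasDNF_top : HasDNF h X ⊤ := ⟨{(∅, ∅)}, by simp, by simp [dnfTerm]⟩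

lemma HasDNF.sup {p q : C} (hp : HasDNF h X p) (hq : HasDNF h X q) : HasDNF h X (p ⊔ q) := by
  obtain ⟨T₁, hT₁, rfl⟩ := hp
  obtain ⟨T₂, hT₂, rfl⟩ := hq
  exact ⟨T₁ ∪ T₂, fun t ht => (Finset.mem_union.1 ht).elim (hT₁ t) (hT₂ t), Finset.sup_union.symm⟩

lemma HasDNF.inf {p q : C} (hp : HasDNF h X p) (hq : HasDNF h X q) : HasDNF h X (p ⊓ q) := by
  obtain ⟨T₁, hT₁, rfl⟩ := hp
  obtain ⟨T₂, hT₂, rfl⟩ := hq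
  refine ⟨(T₁ ×ˢ T₂).image fun u => (u.1.1 ∪ u.2.1, u.1.2 ∪ u.2.2), ?_, ?_⟩
  · simp only [Finset.mem_image, Finset.mem_product]
    rintro _ ⟨u, ⟨hu₁, hu₂⟩, rfl⟩
    simp only [Finset.coe_union]
    exact ⟨Set.union_subset (hT₁ _ hu₁).1 (hT₂ _ hu₂).1, Set.union_subset (hT₁ _ hu₁).2 (hT₂ _ hu₂).2⟩
  · rw [Finset.sup_image, Finset.sup_inf_sup]
    exact Finset.sup_congr rfl fun u _ => dnfTerm_inf_dnfTerm u.1 u.2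

lemma hasDNF_finsetSup {ι : Type*} {s : Finset ι} {q : ι → C}
    (hq : ∀ i ∈ s, HasDNF h X (q i)) : HasDNF h X (s.sup q) := by
  induction s using Finset.cons_induction with
  | empty => exact hasDNF_bot
  | cons a s _ ih =>
    rw [Finset.sup_cons]
    exact (hq a (s.mem_cons_self a)).sup (ih fun i hi => hq i (Finset.mem_cons_of_mem hi))

lemma hasDNF_finsetInf {ι : Type*} {s : Finset ι} {q : ι → C}
    (hq : ∀ i ∈ s, HasDNF h X (q i)) : HasDNF h X (s.inf q) := by
  induction s using Finset.cons_induction with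
  | empty => exact hasDNF_top
  | cons a s _ ih =>
    rw [Finset.inf_cons]
    exact (hq a (s.mem_cons_self a)).inf (ih fun i hi => hq i (Finset.mem_cons_of_mem hi))

lemma HasDNF.compl {p : C} (hp : HasDNF h X p) : HasDNF h X pᶜ := by
  obtain ⟨T, hT, rfl⟩ := hp
  rw [Finset.compl_sup]
  refine hasDNF_finsetInf fun t ht => ?_
  rw [dnfTerm, compl_inf, compl_compl, Finset.compl_inf]
  exact (hasDNF_finsetSup fun x hx => hasDNF_compl_of_mem ((hT t ht).1 hx)).sup
    (hasDNF_finsetSup fun x hx => hasDNF_of_mem ((hT t ht).2 hx))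

lemma Gen.hasDNF {p : C} (hp : Gen (h '' X) p) : HasDNF h X p := by
  induction hp with
  | of hx => obtain ⟨y, hy, rfl⟩ := hx; exact hasDNF_of_mem hy
  | bot => exact hasDNF_bot
  | top => exact hasDNF_top
  | inf _ _ ih₁ ih₂ => exact ih₁.inf ih₂
  | sup _ _ ih₁ ih₂ => exact ih₁.sup ih₂
  | compl _ ih => exact ih.compl

end NormalForm

lemma Gen.symmDiff [BooleanAlgebra A] {X : Set A} {a b : A} (ha : Gen X a) (hb : Gen X b) :
    Gen X (symmDiff a b) := by
  rw [symmDiff_eq]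
  exact (ha.inf hb.compl).sup (hb.inf ha.compl)

lemma Gen.apply_eq_of_eqOn {F B : Type*} [BooleanAlgebra A] [BooleanAlgebra B] [FunLike F A B]
    [BoundedLatticeHomClass F A B] {X : Set A} {g₁ g₂ : F} (hX : ∀ x ∈ X, g₁ x = g₂ x) {a : A}
    (ha : Gen X a) : g₁ a = g₂ a := by
  induction ha with
  | of hx => exact hX _ hx
  | bot => simp only [map_bot]
  | top => simp only [map_top]
  | inf _ _ ih₁ ih₂ => simp only [map_inf, ih₁, ih₂]
  | sup _ _ ih₁ ih₂ => simp only [map_sup, ih₁, ih₂]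
  | compl _ ih => simp only [map_compl', ih]

section Independence

variable {B : Type*} [BooleanAlgebra A] [BooleanAlgebra B] {n : ℕ∞} {X : Set A} {f : A → B}

lemma NIndep.inf_map_eq_bot (hind : NIndep n X) (hf : NPreserving n X f) {F : Finset A}
    (hF : ↑F ⊆ X) (h0 : F.inf id = ⊥) : F.inf f = ⊥ := by
  obtain ⟨F', hF'F, hF'n, hF'0⟩ : ∃ F' ⊆ F, (F'.card : ℕ∞) ≤ n ∧ F'.inf id = ⊥ := by
    rcases F.eq_empty_or_nonempty with rfl | hne
    · exact ⟨∅, subset_rfl, by simp, h0⟩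
    · exact hind.2.2.1 F hne hF h0
  exact le_bot_iff.1 <| (Finset.inf_mono hF'F).trans
    (hf F' ((Finset.coe_subset.2 hF'F).trans hF) hF'n hF'0).le

lemma NIndep.inter_nonempty (hind : NIndep n X) {F G : Finset A} (hF : ↑F ⊆ X) (hG : ↑G ⊆ X)
    (hF0 : F.inf id ≠ ⊥) (hFG : F.inf id ≤ G.sup id) : (F ∩ G).Nonempty := by
  rcases G.eq_empty_or_nonempty with rfl | hGne
  · exact absurd (le_bot_iff.1 hFG) hF0
  rcases F.eq_empty_or_nonempty with rfl | hFne
  · exact absurd (top_le_iff.1 hFG) (hind.2.1 G hGne hG)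
  exact hind.2.2.2 F G hFne hGne hF hG hF0 hFG

lemma NIndep.dnfTerm_eq_bot (hind : NIndep n X) (hf : NPreserving n X f)
    {t : Finset A × Finset A} (ht : ↑t.1 ⊆ X ∧ ↑t.2 ⊆ X) (h0 : dnfTerm id t = ⊥) :
    dnfTerm f t = ⊥ := by
  by_cases hF0 : t.1.inf id = ⊥
  · exact le_bot_iff.1 <| inf_le_left.trans (hind.inf_map_eq_bot hf ht.1 hF0).le
  have hFG : t.1.inf id ≤ t.2.sup id := by rwa [dnfTerm, ← sdiff_eq, sdiff_eq_bot_iff] at h0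
  obtain ⟨x, hx⟩ := hind.inter_nonempty ht.1 ht.2 hF0 hFG
  rw [Finset.mem_inter] at hx
  refine le_bot_iff.1 ?_
  calc dnfTerm f t ≤ f x ⊓ (f x)ᶜ :=
        inf_le_inf (Finset.inf_le hx.1) (compl_le_compl (Finset.le_sup (f := f) hx.2))
    _ = ⊥ := inf_compl_eq_bot

end Independence

lemma Finset.inf_prodMk {ι α β : Type*} [SemilatticeInf α] [OrderTop α] [SemilatticeInf β]
    [OrderTop β] (s : Finset ι) (u : ι → α) (v : ι → β) :
    s.inf (fun i => (u i, v i)) = (s.inf u, s.inf v) :=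
  Prod.ext (Finset.apply_inf_eq_inf_comp Prod.fst (fun _ _ => rfl) rfl)
    (Finset.apply_inf_eq_inf_comp Prod.snd (fun _ _ => rfl) rfl)

lemma Finset.sup_prodMk {ι α β : Type*} [SemilatticeSup α] [OrderBot α] [SemilatticeSup β]
    [OrderBot β] (s : Finset ι) (u : ι → α) (v : ι → β) :
    s.sup (fun i => (u i, v i)) = (s.sup u, s.sup v) :=
  Prod.ext (Finset.apply_sup_eq_sup_comp Prod.fst (fun _ _ => rfl) rfl)
    (Finset.apply_sup_eq_sup_comp Prod.snd (fun _ _ => rfl) rfl)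

section Graph

variable {B : Type*} [BooleanAlgebra A] [BooleanAlgebra B] {X : Set A} {f : A → B}

def graphOn (f : A → B) (X : Set A) : Set (A × B) := (fun x => (x, f x)) '' X

lemma dnfTerm_graph (t : Finset A × Finset A) :
    dnfTerm (fun x => (x, f x)) t = (dnfTerm id t, dnfTerm f t) := by
  rw [dnfTerm, Finset.inf_prodMk, Finset.sup_prodMk]
  rfl

lemma NIndep.snd_eq_bot_of_gen_graph {n : ℕ∞} (hind : NIndep n X) (hf : NPreserving n X f)
    {p : A × B} (hp : Gen (graphOn f X) p) (h0 : p.1 = ⊥) : p.2 = ⊥ := by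
  obtain ⟨T, hT, rfl⟩ := hp.hasDNF
  rw [show dnfTerm (fun x => (x, f x)) = fun t => (dnfTerm id t, dnfTerm f t) from
    funext dnfTerm_graph, Finset.sup_prodMk] at h0 ⊢
  rw [Finset.sup_eq_bot_iff] at h0 ⊢
  exact fun t ht => hind.dnfTerm_eq_bot hf (hT t ht) (h0 t ht)

lemma NIndep.eq_of_gen_graph {n : ℕ∞} (hind : NIndep n X) (hf : NPreserving n X f) {a : A}
    {b b' : B} (hb : Gen (graphOn f X) (a, b)) (hb' : Gen (graphOn f X) (a, b')) : b = b' := by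
  have h0 := hind.snd_eq_bot_of_gen_graph hf (hb.symmDiff hb') (by simp [symmDiff_fst])
  rwa [symmDiff_snd, symmDiff_eq_bot] at h0

lemma exists_gen_graph (hgen : Generates X) (f : A → B) (a : A) :
    ∃ b, Gen (graphOn f X) (a, b) := by
  induction hgen a with
  | of hx => exact ⟨_, .of ⟨_, hx, rfl⟩⟩
  | bot => exact ⟨⊥, .bot⟩
  | top => exact ⟨⊤, .top⟩
  | inf _ _ ih₁ ih₂ => obtain ⟨b₁, hb₁⟩ := ih₁; obtain ⟨b₂, hb₂⟩ := ih₂; exact ⟨_, hb₁.inf hb₂⟩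
  | sup _ _ ih₁ ih₂ => obtain ⟨b₁, hb₁⟩ := ih₁; obtain ⟨b₂, hb₂⟩ := ih₂; exact ⟨_, hb₁.sup hb₂⟩
  | compl _ ih => obtain ⟨b, hb⟩ := ih; exact ⟨_, hb.compl⟩

lemma exists_boundedLatticeHom_of_gen_graph (hgen : Generates X)
    (hfun : ∀ (a : A) (b b' : B), Gen (graphOn f X) (a, b) → Gen (graphOn f X) (a, b') → b = b') :
    ∃ g : BoundedLatticeHom A B, ∀ x ∈ X, g x = f x := by
  choose g hg using exists_gen_graph hgen f
  have hg_eq (a : A) (b : B) (hb : Gen (graphOn f X) (a, b)) : g a = b :=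
    hfun a _ _ (hg a) hb
  exact ⟨{ toFun := g
           map_sup' := fun a b => hg_eq (a ⊔ b) (g a ⊔ g b) ((hg a).sup (hg b))
           map_inf' := fun a b => hg_eq (a ⊓ b) (g a ⊓ g b) ((hg a).inf (hg b))
           map_top' := hg_eq ⊤ ⊤ .top
           map_bot' := hg_eq ⊥ ⊥ .bot },
    fun x hx => hg_eq x (f x) (.of ⟨x, hx, rfl⟩)⟩

end Graph

theorem stmt_8.{u, v} {A : Type u} [BooleanAlgebra A] (n : ℕ) (hn : 0 < n) (X : Set A)
    (hgen : Generates X) (hind : NIndep (n : ℕ∞) X)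
    {B : Type v} [BooleanAlgebra B] (f : A → B) (hf : NPreserving (n : ℕ∞) X f) :
    ∃! g : BoundedLatticeHom A B, ∀ x ∈ X, g x = f x := by
  obtain ⟨g, hg⟩ := exists_boundedLatticeHom_of_gen_graph hgen fun _ _ _ => hind.eq_of_gen_graph hf
  refine ⟨g, hg, fun g' hg' => DFunLike.ext _ _ fun a => ?_⟩
  exact (hgen a).apply_eq_of_eqOn fun x hx => (hg' x hx).trans (hg x hx).symm
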